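/- Let p be an odd prime, k an integer, α an integer not divisible by p, and set σ := χ_p(α)·ε_p. Suppose that for each γ ∈ ℤ/pℤ a function F_γ : ℍ → ℂ is given satisfying the S-transformation law F_γ(−1/τ) = (σ/√p)·τ^k·∑_{β ∈ ℤ/pℤ} e(2αβ̃γ̃/p)·F_β(τ) for all γ ∈ ℤ/pℤ and all τ ∈ ℍ. Then F_{−γ} = (−1)^k·χ_p(−1)·F_γ for all γ ∈ ℤ/pℤ. -/
import Mathlib
open Complex Finset

/-- `e(x) = exp(2πix)`. -/
noncomputable def e (x : ℂ) : ℂ := Complex.exp (2 * (Real.pi : ℂ) * Complex.I * x)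

/-- `ε_p = 1` if `p ≡ 1 (mod 4)` and `ε_p = i` if `p ≡ 3 (mod 4)`. -/
noncomputable def εp (p : ℕ) : ℂ := if p % 4 = 1 then 1 else Complex.I

lemma e_int (n : ℤ) : e n = 1 := by
  rw [e, show 2 * (Real.pi:ℂ) * I * n = n * (2 * Real.pi * I) by ring]
  exact Complex.exp_int_mul_two_pi_mul_I n

lemma e_pow (x : ℂ) (n : ℕ) : e x ^ n = e (n * x) := by
  rw [e, e, ← Complex.exp_nat_mul]; ring_nf

lemma e_add (x y : ℂ) : e (x + y) = e x * e y := by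
  rw [e, e, e, ← Complex.exp_add]; ring_nf

lemma e_eq_one_iff (x : ℂ) : e x = 1 ↔ ∃ n : ℤ, x = n := by
  rw [e, Complex.exp_eq_one_iff]
  have h2 : (2 * (Real.pi:ℂ) * I) ≠ 0 :=
    mul_ne_zero (mul_ne_zero two_ne_zero (Complex.ofReal_ne_zero.mpr Real.pi_ne_zero))
      Complex.I_ne_zero
  constructor
  · rintro ⟨n, hn⟩
    refine ⟨n, mul_left_cancel₀ h2 ?_⟩
    rw [hn]; ring
  · rintro ⟨n, rfl⟩; exact ⟨n, by ring⟩

lemma sum_e_val (p : ℕ) [Fact p.Prime] (N : ℤ) :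
    ∑ β : ZMod p, e ((N:ℂ) * (β.val : ℂ) / p) = if (p:ℤ) ∣ N then (p:ℂ) else 0 := by
  have hp : 0 < p := (Fact.out : p.Prime).pos
  have : NeZero p := ⟨hp.ne'⟩
  have hpC : (p : ℂ) ≠ 0 := Nat.cast_ne_zero.mpr hp.ne'
  have hre : ∑ β : ZMod p, e ((N:ℂ) * (β.val : ℂ) / p)
      = ∑ i ∈ range p, e ((N:ℂ) * (i : ℂ) / p) := by
    apply Finset.sum_nbij' (fun β : ZMod p => β.val) (fun i : ℕ => (i : ZMod p))
    · intro a _; exact mem_range.mpr (ZMod.val_lt a)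
    · intro a _; exact mem_univ _
    · intro a _; exact ZMod.natCast_zmod_val a
    · intro a ha; exact ZMod.val_cast_of_lt (mem_range.mp ha)
    · intro a _; rfl
  rw [hre]
  have hkey : ∀ i : ℕ, e ((N:ℂ) * (i:ℂ) / p) = e ((N:ℂ)/p) ^ i := by
    intro i; rw [e_pow]; ring_nf
  simp_rw [hkey]
  by_cases hd : (p:ℤ) ∣ N
  · rw [if_pos hd]
    obtain ⟨m, rfl⟩ := hd
    have h1 : e ((((p:ℤ)*m : ℤ):ℂ)/p) = 1 := by
      push_cast
      rw [mul_comm, mul_div_assoc, div_self hpC, mul_one]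
      exact e_int m
    rw [h1]; simp
  · rw [if_neg hd]
    have hx1 : e ((N:ℂ)/p) ≠ 1 := by
      rw [Ne, e_eq_one_iff]
      rintro ⟨n, hn⟩
      apply hd
      refine ⟨n, ?_⟩
      have hc : (N : ℂ) = (p:ℂ) * n := by
        field_simp at hn; linear_combination hn
      exact_mod_cast hc
    have hxp : e ((N:ℂ)/p) ^ p = 1 := by
      rw [e_pow, mul_div_assoc', mul_comm, mul_div_assoc, div_self hpC, mul_one]
      exact e_int N
    rw [geom_sum_eq hx1, hxp]; simp

theorem component_symmetry_of_S_transform (p : ℕ) [Fact p.Prime] (hp2 : p ≠ 2)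
    (k : ℤ) (α : ℤ) (hα : ¬ (p : ℤ) ∣ α) (σ : ℂ)
    (hσ : σ = (legendreSym p α : ℂ) * εp p)
    (F : ZMod p → ℂ → ℂ)
    (hS : ∀ γ : ZMod p, ∀ τ : ℂ, 0 < τ.im →
      F γ (-1 / τ) = (σ / Real.sqrt p) * τ ^ k *
        ∑ β : ZMod p, e (2 * (α : ℂ) * (β.val : ℂ) * (γ.val : ℂ) / p) * F β τ) :
    ∀ γ : ZMod p, ∀ τ : ℂ, 0 < τ.im →
      F (-γ) τ = (-1 : ℂ) ^ k * (legendreSym p (-1) : ℂ) * F γ τ := by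
  have hp : p.Prime := Fact.out
  have hppos : 0 < p := hp.pos
  have : NeZero p := ⟨hppos.ne'⟩
  have hpC : (p : ℂ) ≠ 0 := Nat.cast_ne_zero.mpr hppos.ne'
  have hpI : Prime (p : ℤ) := Nat.prime_iff_prime_int.mp hp
  have hp2' : ¬ (p:ℤ) ∣ 2 := by
    intro h
    have h1 := Int.le_of_dvd (by norm_num) h
    have h3 : 3 ≤ p := by
      rcases hp.two_le.lt_or_eq with h | h
      · omega
      · exact absurd h.symm hp2
    omega
  have hn1 : ((-1 : ℤ) : ZMod p) ≠ 0 := by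
    intro h
    rw [ZMod.intCast_zmod_eq_zero_iff_dvd] at h
    have h1 : (p:ℤ) ∣ 1 := dvd_neg.mp h
    have h2 := Int.le_of_dvd one_pos h1
    have h3 : (2:ℤ) ≤ (p:ℤ) := by exact_mod_cast hp.two_le
    omega
  have hσ2 : σ ^ 2 = (legendreSym p (-1) : ℂ) := by
    rw [hσ, mul_pow]
    have hα0 : (α : ZMod p) ≠ 0 := by
      rw [Ne, ZMod.intCast_zmod_eq_zero_iff_dvd]; exact hα
    have hleg : (legendreSym p α : ℂ) ^ 2 = 1 := by
      rw [← Int.cast_pow, legendreSym.sq_one p hα0]; norm_num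
    rw [hleg, one_mul, legendreSym.at_neg_one hp2]
    have hmod : p % 4 = 1 ∨ p % 4 = 3 := by
      have hodd : p % 2 = 1 := Nat.odd_iff.mp (hp.odd_of_ne_two hp2)
      omega
    rcases hmod with h | h
    · rw [εp, if_pos h, ZMod.χ₄_nat_one_mod_four h]; norm_num
    · rw [εp, if_neg (by omega), ZMod.χ₄_nat_three_mod_four h]
      simp [Complex.I_sq]
  intro γ τ hτ
  have hτ0 : τ ≠ 0 := fun h => by rw [h] at hτ; simp at hτ
  have him : 0 < (-1/τ).im := by
    rw [div_eq_mul_inv, neg_one_mul, Complex.neg_im, Complex.inv_im]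
    have hns := Complex.normSq_pos.mpr hτ0
    rw [neg_div, neg_neg]
    positivity
  have hinv : -1 / (-1/τ) = τ := by field_simp
  have hsC : ((Real.sqrt p : ℝ) : ℂ) * ((Real.sqrt p : ℝ) : ℂ) = (p:ℂ) := by
    rw [← Complex.ofReal_mul, Real.mul_self_sqrt (Nat.cast_nonneg p)]
    push_cast; ring
  have key : ∀ δ : ZMod p, F δ τ = σ^2 * (-1:ℂ)^k * F (-δ) τ := by
    intro δ
    have h2 := hS δ (-1/τ) him
    rw [hinv] at h2
    have h3 : ∀ β : ZMod p, F β (-1/τ) = (σ / Real.sqrt p) * τ ^ k *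
        ∑ ρ : ZMod p, e (2 * (α : ℂ) * (ρ.val : ℂ) * (β.val : ℂ) / p) * F ρ τ :=
      fun β => hS β τ hτ
    simp_rw [h3] at h2
    have hchar : ∀ ρ : ZMod p,
        (∑ β : ZMod p, e (2*(α:ℂ)*(β.val:ℂ)*(δ.val:ℂ)/p) * e (2*(α:ℂ)*(ρ.val:ℂ)*(β.val:ℂ)/p))
        = if ρ = -δ then (p:ℂ) else 0 := by
      intro ρ
      have h4 : ∀ β : ZMod p,
          e (2*(α:ℂ)*(β.val:ℂ)*(δ.val:ℂ)/p) * e (2*(α:ℂ)*(ρ.val:ℂ)*(β.val:ℂ)/p)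
          = e (((2*α*((δ.val:ℤ)+(ρ.val:ℤ)) : ℤ) : ℂ) * (β.val:ℂ) / p) := by
        intro β; rw [← e_add]; congr 1; push_cast; ring
      simp_rw [h4]
      rw [sum_e_val p]
      have hcond : (p:ℤ) ∣ 2*α*((δ.val:ℤ)+(ρ.val:ℤ)) ↔ ρ = -δ := by
        rw [hpI.dvd_mul, hpI.dvd_mul]
        constructor
        · rintro ((h|h)|h)
          · exact absurd h hp2'
          · exact absurd h hα
          · have h5 : (p:ℤ) ∣ ((δ.val + ρ.val : ℕ) : ℤ) := by push_cast; exact h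
            rw [Int.natCast_dvd_natCast] at h5
            have h6 : ((δ.val + ρ.val : ℕ) : ZMod p) = 0 :=
              (ZMod.natCast_eq_zero_iff _ _).mpr h5
            push_cast [ZMod.natCast_zmod_val] at h6
            exact eq_neg_of_add_eq_zero_right h6
        · intro h
          right
          subst h
          have h6 : ((δ.val + (-δ).val : ℕ) : ZMod p) = 0 := by
            push_cast [ZMod.natCast_zmod_val]; ring
          rw [ZMod.natCast_eq_zero_iff] at h6
          have : (p:ℤ) ∣ ((δ.val + (-δ).val : ℕ) : ℤ) := Int.natCast_dvd_natCast.mpr h6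
          push_cast at this
          exact this
      exact if_congr hcond rfl rfl
    have hsum : (∑ β : ZMod p, e (2*(α:ℂ)*(β.val:ℂ)*(δ.val:ℂ)/p) *
          ((σ / (Real.sqrt p : ℝ)) * τ ^ k *
            ∑ ρ : ZMod p, e (2*(α:ℂ)*(ρ.val:ℂ)*(β.val:ℂ)/p) * F ρ τ))
        = (σ / (Real.sqrt p : ℝ)) * τ ^ k * ((p:ℂ) * F (-δ) τ) := by
      calc (∑ β : ZMod p, e (2*(α:ℂ)*(β.val:ℂ)*(δ.val:ℂ)/p) *
              ((σ / (Real.sqrt p : ℝ)) * τ ^ k *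
                ∑ ρ : ZMod p, e (2*(α:ℂ)*(ρ.val:ℂ)*(β.val:ℂ)/p) * F ρ τ))
          = (σ / (Real.sqrt p : ℝ)) * τ ^ k * ∑ β : ZMod p, ∑ ρ : ZMod p,
              e (2*(α:ℂ)*(β.val:ℂ)*(δ.val:ℂ)/p) * e (2*(α:ℂ)*(ρ.val:ℂ)*(β.val:ℂ)/p) * F ρ τ := by
            rw [Finset.mul_sum]
            apply Finset.sum_congr rfl
            intro β _
            rw [Finset.mul_sum, Finset.mul_sum, Finset.mul_sum]
            apply Finset.sum_congr rfl
            intro ρ _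
            ring
        _ = (σ / (Real.sqrt p : ℝ)) * τ ^ k * ∑ ρ : ZMod p,
              (∑ β : ZMod p, e (2*(α:ℂ)*(β.val:ℂ)*(δ.val:ℂ)/p) *
                e (2*(α:ℂ)*(ρ.val:ℂ)*(β.val:ℂ)/p)) * F ρ τ := by
            rw [Finset.sum_comm]
            congr 1
            apply Finset.sum_congr rfl
            intro ρ _
            rw [Finset.sum_mul]
        _ = (σ / (Real.sqrt p : ℝ)) * τ ^ k * ((p:ℂ) * F (-δ) τ) := by
            congr 1
            simp_rw [hchar, ite_mul, zero_mul]
            rw [Finset.sum_ite_eq' Finset.univ (-δ) (fun ρ => (p:ℂ) * F ρ τ)]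
            simp
    rw [hsum] at h2
    have hk2 : (-1/τ:ℂ)^k * τ^k = (-1:ℂ)^k := by
      rw [← mul_zpow, div_mul_cancel₀ _ hτ0]
    calc F δ τ = σ / (Real.sqrt p : ℝ) * (-1 / τ) ^ k *
          (σ / (Real.sqrt p : ℝ) * τ ^ k * ((p:ℂ) * F (-δ) τ)) := h2
      _ = σ^2 * ((-1/τ:ℂ)^k * τ^k) *
          ((p:ℂ) / (((Real.sqrt p : ℝ):ℂ) * ((Real.sqrt p : ℝ):ℂ))) * F (-δ) τ := by ring
      _ = σ^2 * (-1:ℂ)^k * F (-δ) τ := by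
          rw [hk2, hsC, div_self hpC, mul_one]
  have hkey2 := key (-γ)
  rw [neg_neg] at hkey2
  rw [hkey2, hσ2]
  ring
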